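/- Let M ≥ 4 be a power of 2, let H_0,...,H_{M−1} be the M cosets of a Hamming code of length M−1 (a perfect 1-error-correcting binary linear code), indexed so that H_0 is the code itself, and let c' be an integer with 0 < c' < M. Then the 2-coloring of H(M−1,2) whose first color class is H_i ∪ H_{i+1} ∪ ... ∪ H_{i+c'−1} (indices mod M) is a perfect coloring with quotient matrix [[c'−1, M−c'], [c', M−c'−1]]. -/

import Mathlib

/-- The Hamming graph `H(n, α)`: vertices are words of length `n` over `α`,
adjacent iff they differ in exactly one coordinate. -/
def HammingGraph (n : ℕ) (α : Type*) [DecidableEq α] : SimpleGraph (Fin n → α) where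
  Adj x y := hammingDist x y = 1
  symm := ⟨fun x y h => by exact (hammingDist_comm y x).trans h⟩
  loopless := ⟨fun x h => by simp only [hammingDist_self] at h; exact absurd h (by omega)⟩

instance {n : ℕ} {α : Type*} [DecidableEq α] : DecidableRel (HammingGraph n α).Adj :=
  fun x y => inferInstanceAs (Decidable (hammingDist x y = 1))

/-- `f` is a perfect coloring of `G` with quotient matrix `S`: every vertex of
color `i` has exactly `S i j` neighbors of color `j`. -/
def IsPerfectColoring {V K : Type*} [Fintype V] [DecidableEq K] (G : SimpleGraph V)
    [DecidableRel G.Adj] (f : V → K) (S : K → K → ℕ) : Prop :=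
  ∀ x : V, ∀ j : K, (Finset.univ.filter (fun y => G.Adj x y ∧ f y = j)).card = S (f x) j

/-- A function on words depends essentially on its `k`-th argument. -/
def EssentialDep {α K : Type*} {n : ℕ} (f : (Fin n → α) → K) (k : Fin n) : Prop :=
  ∃ x y : Fin n → α, (∀ t, t ≠ k → x t = y t) ∧ f x ≠ f y

/-!
A vertex lies within distance one of exactly one word of a perfect 1-error-correcting code,
so it has no neighbour in a coset containing it and exactly one neighbour in every other coset.
The cyclic window `i, …, i + c' - 1` hits `c'` distinct, pairwise disjoint cosets, hence a vertex
has `c' - 1` neighbours in their union if it lies in it and `c'` otherwise; since the hypercube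
is `(M - 1)`-regular, the remaining neighbours carry the other colour.
-/

open Finset

theorem hammingDist_eq_one_iff {ι α : Type*} [Fintype ι] [DecidableEq ι] [DecidableEq α]
    {x y : ι → α} : hammingDist x y = 1 ↔ ∃ k, ∃ a ≠ x k, Function.update x k a = y := by
  refine ⟨fun h => ?_, ?_⟩
  · obtain ⟨k, hk⟩ := card_eq_one.mp h
    have hdiff : ∀ i, x i ≠ y i ↔ i = k := fun i => by
      simpa using congrArg (i ∈ ·) hk
    exact ⟨k, y k, fun h => (hdiff k).2 rfl h.symm,
      Function.update_eq_iff.2 ⟨rfl, fun i hi => not_not.1 (mt (hdiff i).1 hi)⟩⟩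
  · rintro ⟨k, a, ha, rfl⟩
    refine card_eq_one.2 ⟨k, ?_⟩
    ext i
    by_cases hi : i = k
    · subst hi; simpa using Ne.symm ha
    · simp [hi]

@[simp]
theorem hammingGraph_adj {n : ℕ} {α : Type*} [DecidableEq α] {x y : Fin n → α} :
    (HammingGraph n α).Adj x y ↔ hammingDist x y = 1 :=
  Iff.rfl

theorem HammingGraph.isRegularOfDegree (n : ℕ) (α : Type*) [Fintype α] [DecidableEq α] :
    (HammingGraph n α).IsRegularOfDegree (n * (Fintype.card α - 1)) := by
  intro x
  have hnbhd : (HammingGraph n α).neighborFinset x =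
      (univ.sigma fun k => univ.erase (x k)).image fun p => Function.update x p.1 p.2 := by
    ext y
    rw [SimpleGraph.mem_neighborFinset]
    simp [hammingGraph_adj, hammingDist_eq_one_iff]
  have hinj : Set.InjOn (fun p : (_ : Fin n) × α => Function.update x p.1 p.2)
      (univ.sigma fun k => univ.erase (x k) : Finset _) := by
    rintro ⟨k, a⟩ hka ⟨l, b⟩ - h
    simp only [coe_sigma, Set.mem_sigma_iff, coe_univ, Set.mem_univ, coe_erase, Set.mem_sdiff,
      Set.mem_singleton_iff, true_and] at hka
    obtain rfl : k = l := by
      by_contra hkl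
      exact hka (by simpa [Function.update_of_ne hkl] using congrFun h k)
    simpa using congrFun h k
  rw [← SimpleGraph.card_neighborFinset_eq_degree, hnbhd, card_image_of_injOn hinj, card_sigma]
  simp [card_erase_of_mem]

theorem hammingDist_sub_right {ι α : Type*} [Fintype ι] [AddGroup α] [DecidableEq α]
    (x y v : ι → α) : hammingDist (x - v) (y - v) = hammingDist x y :=
  hammingDist_comp (fun i a => a - v i) fun _ => sub_left_injective

def IsPerfectCode {ι α : Type*} [Fintype ι] [DecidableEq α] (C : Set (ι → α)) : Prop :=
  ∀ x, ∃! c ∈ C, hammingDist x c ≤ 1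

theorem IsPerfectCode.preimage_sub {ι α : Type*} [Fintype ι] [AddGroup α] [DecidableEq α]
    {C : Set (ι → α)} (hC : IsPerfectCode C) (v : ι → α) :
    IsPerfectCode ((· - v) ⁻¹' C) := by
  intro x
  obtain ⟨c, ⟨hc, hxc⟩, huniq⟩ := hC (x - v)
  refine ⟨c + v, ⟨by simpa using hc, ?_⟩, fun y ⟨hy, hxy⟩ => ?_⟩
  · rwa [← hammingDist_sub_right x _ v, add_sub_cancel_right]
  · rw [← huniq (y - v) ⟨hy, by rwa [hammingDist_sub_right]⟩, sub_add_cancel]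

theorem IsPerfectCode.card_adj_mem {n : ℕ} {α : Type*} [Fintype α] [DecidableEq α]
    {C : Finset (Fin n → α)} (hC : IsPerfectCode (C : Set (Fin n → α))) (x : Fin n → α) :
    #{y | (HammingGraph n α).Adj x y ∧ y ∈ C} = if x ∈ C then 0 else 1 := by
  obtain ⟨c, ⟨hc, hxc⟩, huniq⟩ := hC x
  have hnbr : ∀ y, hammingDist x y = 1 → y ∈ C → y = c :=
    fun y hxy hy => huniq y ⟨hy, hxy.le⟩
  split_ifs with hx
  · rw [card_eq_zero, filter_eq_empty_iff]
    rintro y - ⟨hxy, hy⟩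
    rw [hammingGraph_adj, hnbr y hxy hy, ← huniq x ⟨hx, by simp⟩, hammingDist_self] at hxy
    exact zero_ne_one hxy
  · refine card_eq_one.2 ⟨c, eq_singleton_iff_unique_mem.2 ⟨?_, fun y hy => ?_⟩⟩
    · have hcx : c ≠ x := fun h => hx (h ▸ hc)
      exact (mem_filter_univ _).2 ⟨le_antisymm hxc (hammingDist_pos.2 hcx.symm), hc⟩
    · simp only [mem_filter_univ, hammingGraph_adj] at hy
      exact hnbr y hy.1 hy.2

theorem IsPerfectCode.card_adj_mem_biUnion {n : ℕ} {α κ : Type*} [Fintype α] [DecidableEq α]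
    {s : Finset κ} {H : κ → Finset (Fin n → α)} (hdisj : (s : Set κ).PairwiseDisjoint H)
    (hH : ∀ t ∈ s, IsPerfectCode (H t : Set (Fin n → α))) (x : Fin n → α) :
    #{y | (HammingGraph n α).Adj x y ∧ y ∈ s.biUnion H} =
      if x ∈ s.biUnion H then #s - 1 else #s := by
  have hsplit : ({y | (HammingGraph n α).Adj x y ∧ y ∈ s.biUnion H} : Finset _) =
      s.biUnion fun t => {y | (HammingGraph n α).Adj x y ∧ y ∈ H t} := by
    ext y
    simp only [mem_filter_univ, mem_biUnion]
    tauto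
  have hsub : ∀ t, ({y | (HammingGraph n α).Adj x y ∧ y ∈ H t} : Finset _) ⊆ H t :=
    fun t y hy => ((mem_filter_univ _).1 hy).2
  rw [hsplit, card_biUnion fun t ht u hu htu => (hdisj ht hu htu).mono (hsub t) (hsub u),
    sum_congr rfl fun t ht => (hH t ht).card_adj_mem x]
  split_ifs with hx
  · classical
    obtain ⟨t₀, ht₀, hxt₀⟩ := mem_biUnion.1 hx
    have hx_other : ∀ t ∈ s.erase t₀, x ∉ H t := fun t ht =>
      disjoint_right.1 (hdisj (mem_of_mem_erase ht) ht₀ (ne_of_mem_erase ht)) hxt₀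
    rw [← add_sum_erase s _ ht₀, if_pos hxt₀, sum_congr rfl fun t ht => if_neg (hx_other t ht)]
    simp [card_erase_of_mem ht₀]
  · rw [sum_congr rfl fun t ht => if_neg fun hxt => hx (mem_biUnion.2 ⟨t, ht, hxt⟩)]
    simp

theorem SimpleGraph.isPerfectColoring_ite_mem {V : Type*} [Fintype V] [DecidableEq V]
    {G : SimpleGraph V} [DecidableRel G.Adj] {d : ℕ} (hG : G.IsRegularOfDegree d) (S : Finset V) {a a' b b' : ℕ}
    (ha : a + a' = d) (hb : b + b' = d) (hin : ∀ x ∈ S, #{y | G.Adj x y ∧ y ∈ S} = a)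
    (hout : ∀ x ∉ S, #{y | G.Adj x y ∧ y ∈ S} = b) :
    IsPerfectColoring G (fun x => if x ∈ S then (0 : Fin 2) else 1) ![![a, a'], ![b, b']] := by
  intro x j
  have hsplit : #{y | G.Adj x y ∧ y ∈ S} + #{y | G.Adj x y ∧ y ∉ S} = d := by
    rw [← hG x, ← card_neighborFinset_eq_degree, neighborFinset_eq_filter, ← filter_filter,
      ← filter_filter, card_filter_add_card_filter_not]
  fin_cases j <;> by_cases hx : x ∈ S <;> simp [hx] <;> grind

theorem Nat.injOn_add_mod (i M : ℕ) : Set.InjOn (fun t => (i + t) % M) (Set.Iio M) :=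
  fun _ ht _ hu h => (Nat.ModEq.add_left_cancel' i h).eq_of_lt_of_lt ht hu

theorem stmt13_general (M : ℕ) (hM0 : 0 < M)
    (Hcode : Submodule (ZMod 2) (Fin (M - 1) → ZMod 2))
    (hperfcode : ∀ x : Fin (M - 1) → ZMod 2, ∃! c, c ∈ Hcode ∧ hammingDist x c ≤ 1)
    (H : Fin M → Finset (Fin (M - 1) → ZMod 2))
    (hcoset : ∀ j : Fin M, ∃ v, ∀ x, x ∈ H j ↔ x - v ∈ Hcode)
    (hpart : ∀ x, ∃! j : Fin M, x ∈ H j)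
    (c' : ℕ) (hc1 : 0 < c') (hc2 : c' < M) (i : ℕ) :
    IsPerfectColoring (HammingGraph (M - 1) (ZMod 2))
      (fun x => if x ∈ (Finset.range c').biUnion
            (fun t => H ⟨(i + t) % M, Nat.mod_lt _ hM0⟩)
          then (0 : Fin 2) else 1)
      ![![c' - 1, M - c'], ![c', M - c' - 1]] := by
  set s := (range c').image fun t => (⟨(i + t) % M, Nat.mod_lt _ hM0⟩ : Fin M)
  have hcard : #s = c' := by
    rw [card_image_of_injOn fun t ht u hu h => Nat.injOn_add_mod i M
      ((mem_range.1 ht).trans hc2) ((mem_range.1 hu).trans hc2) (Fin.val_eq_of_eq h), card_range]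
  have hdisj : (s : Set (Fin M)).PairwiseDisjoint H := fun j _ k _ hjk =>
    disjoint_left.2 fun x hxj hxk => hjk ((hpart x).unique hxj hxk)
  have hperf : ∀ j ∈ s, IsPerfectCode (H j : Set (Fin (M - 1) → ZMod 2)) := fun j _ => by
    obtain ⟨v, hv⟩ := hcoset j
    rw [show (H j : Set _) = (· - v) ⁻¹' (Hcode : Set _) from Set.ext hv]
    exact IsPerfectCode.preimage_sub hperfcode v
  have hreg : (HammingGraph (M - 1) (ZMod 2)).IsRegularOfDegree (M - 1) := by
    simpa using HammingGraph.isRegularOfDegree (M - 1) (ZMod 2)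
  rw [← image_biUnion]
  refine SimpleGraph.isPerfectColoring_ite_mem hreg _ (by omega) (by omega)
    (fun x hx => ?_) (fun x hx => ?_)
  · rw [IsPerfectCode.card_adj_mem_biUnion hdisj hperf, if_pos hx, hcard]
  · rw [IsPerfectCode.card_adj_mem_biUnion hdisj hperf, if_neg hx, hcard]

/-- The union of `c'` cyclically consecutive cosets of the Hamming code of length
`M-1` gives a perfect 2-coloring of `H(M-1,2)` with quotient matrix
`[[c'-1, M-c'], [c', M-c'-1]]`. -/
theorem stmt13 (s : ℕ) (hs : 2 ≤ s) (M : ℕ) (hM : M = 2 ^ s) (hM0 : 0 < M)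
    (Hcode : Submodule (ZMod 2) (Fin (M - 1) → ZMod 2))
    (hperfcode : ∀ x : Fin (M - 1) → ZMod 2, ∃! c, c ∈ Hcode ∧ hammingDist x c ≤ 1)
    (H : Fin M → Finset (Fin (M - 1) → ZMod 2))
    (h0 : ∀ x, x ∈ H ⟨0, hM0⟩ ↔ x ∈ Hcode)
    (hcoset : ∀ j : Fin M, ∃ v, ∀ x, x ∈ H j ↔ x - v ∈ Hcode)
    (hpart : ∀ x, ∃! j : Fin M, x ∈ H j)
    (c' : ℕ) (hc1 : 0 < c') (hc2 : c' < M) (i : ℕ) (hi : i < M) :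
    IsPerfectColoring (HammingGraph (M - 1) (ZMod 2))
      (fun x => if x ∈ (Finset.range c').biUnion
            (fun t => H ⟨(i + t) % M, Nat.mod_lt _ hM0⟩)
          then (0 : Fin 2) else 1)
      ![![c' - 1, M - c'], ![c', M - c' - 1]] :=
  stmt13_general M hM0 Hcode hperfcode H hcoset hpart c' hc1 hc2 i
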